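/- arXiv:nlin/0306032 — 7 statements merged into one kernel-verified Lean document; each statement's English description precedes it below -/
import Mathlib

section
/- Let F = (1, S, N, f) be a one-dimensional CA with S ⊂ ℤ finite, N = {-l,...,r}, n = l+r+1, and let a ∈ S be any fixed state. Then F is number-conserving if and only if for all (x_1,...,x_n) ∈ S^n: f(x_1,...,x_n) = x_1 + ∑_{k=1}^{n-1} [ f(a,...,a (n-k times), x_2,...,x_{k+1}) − f(a,...,a (n-k times), x_1,...,x_k) ]. -/
/-!
If the local condition holds, the new value of cell `i` is the old value of cell `i - l`
plus a sum of differences `g (i + 1) - g i` of periodic functions `g`, which telescope over a period.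

Conversely, compare the periodic configuration whose period is `x₁ ⋯ xₙ` padded with `a`s with the
one in which `x₁` is replaced by `a`. Subtracting the two conservation laws, only the `n` windows
meeting the changed cell survive; they read `aⁿ⁻ᵏ x₁ ⋯ xₖ` and `aⁿ⁻ᵏ⁺¹ x₂ ⋯ xₖ`, and together with
`f (a, …, a) = a` this is the local condition.
-/

open Finset

/-- Global map of a 1D CA: the local rule `f` is applied to the window of `c` around each cell. -/
def glob (f : (ℤ → ℤ) → ℤ) (c : ℤ → ℤ) : ℤ → ℤ := fun i => f (fun j => c (i + j))

/-- A configuration over state set `S`. -/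
def Config (S : Finset ℤ) (c : ℤ → ℤ) : Prop := ∀ i, c i ∈ S

/-- `p` is a (spatial) period of `c`. -/
def Per (p : ℕ) (c : ℤ → ℤ) : Prop := ∀ i : ℤ, c (i + (p : ℤ)) = c i

/-- The local rule only depends on the neighborhood `{-l,...,r}`. -/
def LocalRule (l r : ℕ) (f : (ℤ → ℤ) → ℤ) : Prop :=
  ∀ c d : ℤ → ℤ, (∀ j : ℤ, -(l : ℤ) ≤ j → j ≤ (r : ℤ) → c j = d j) → f c = f d

/-- The rule maps `S`-configurations to states in `S`. -/
def Closed (S : Finset ℤ) (f : (ℤ → ℤ) → ℤ) : Prop :=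
  ∀ c, Config S c → f c ∈ S

/-- Number conservation: the sum over one period of any spatially periodic
configuration is preserved by the global map. -/
def NC (S : Finset ℤ) (f : (ℤ → ℤ) → ℤ) : Prop :=
  ∀ c : ℤ → ℤ, Config S c → ∀ p : ℕ, 0 < p → Per p c →
    ∑ k ∈ Finset.range p, glob f c (k : ℤ) = ∑ k ∈ Finset.range p, c (k : ℤ)

/-- The window consisting of n - k copies of a followed by
x_{s+1}, ..., x_{s+k} (positions -l..r, 1-based tuple indexing). -/
def pat (l r : ℕ) (a : ℤ) (w : ℤ → ℤ) (k : ℕ) (s : ℤ) : ℤ → ℤ :=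
  fun j => if j ≤ (r : ℤ) - (k : ℤ) then a else w (j - (r : ℤ) + (k : ℤ) + s - (l : ℤ) - 1)

lemma sum_Icc_one_eq_sum_range {M : Type*} [AddCommMonoid M] (g : ℕ → M) (m : ℕ) :
    ∑ k ∈ Icc 1 m, g k = ∑ i ∈ range m, g (i + 1) := by
  rw [← Finset.Ico_add_one_right_eq_Icc, sum_Ico_eq_sum_range, add_tsub_cancel_right]
  simp only [add_comm 1]

lemma Config.update {S : Finset ℤ} {w : ℤ → ℤ} (hw : Config S w) (i : ℤ) {a : ℤ} (ha : a ∈ S) :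
    Config S (Function.update w i a) := fun j => by
  rw [Function.update_apply]
  split_ifs
  exacts [ha, hw j]

namespace Per

variable {p : ℕ} {h : ℤ → ℤ}

lemma comp_add (hh : Per p h) (t : ℤ) : Per p (fun x => h (x + t)) :=
  Function.Periodic.add_const hh t

lemma glob (F : (ℤ → ℤ) → ℤ) (hh : Per p h) : Per p (_root_.glob F h) := fun i => by
  simp only [_root_.glob, add_right_comm i]
  congr 1
  exact funext fun j => hh (i + j)

lemma sum_range_add_one (hh : Per p h) :
    ∑ k ∈ range p, h ((k : ℤ) + 1) = ∑ k ∈ range p, h k := by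
  have hp : h p = h 0 := by simpa using hh 0
  have h₁ := sum_range_succ (fun k : ℕ => h k) p
  rw [sum_range_succ'] at h₁
  push_cast at h₁
  linarith

lemma sum_range_sub (hh : Per p h) (t : ℕ) :
    ∑ k ∈ range p, h ((k : ℤ) - t) = ∑ k ∈ range p, h k := by
  induction t with
  | zero => simp
  | succ t ih =>
    rw [← ih]
    convert ((hh.comp_add (-(t + 1 : ℤ))).sum_range_add_one).symm using 3 <;> push_cast <;> ring_nf

lemma sum_range_add_one_sub (hh : Per p h) :
    ∑ k ∈ range p, (h ((k : ℤ) + 1) - h k) = 0 := by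
  rw [sum_sub_distrib, hh.sum_range_add_one, sub_self]

end Per

def LocalCondition (S : Finset ℤ) (l r : ℕ) (a : ℤ) (f : (ℤ → ℤ) → ℤ) : Prop :=
  ∀ w : ℤ → ℤ, Config S w →
    f w = w (-(l : ℤ)) + ∑ k ∈ Icc 1 (l + r), (f (pat l r a w k 1) - f (pat l r a w k 0))

section Pattern

variable {l r : ℕ} {a : ℤ}

lemma pat_window_one (c : ℤ → ℤ) (i : ℤ) (k : ℕ) :
    pat l r a (fun j => c (i + j)) k 1 = pat l r a (fun j => c (i + 1 + j)) k 0 := by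
  funext j
  simp only [pat]
  split_ifs <;> ring_nf

lemma pat_update_succ (w : ℤ → ℤ) (k : ℕ) :
    pat l r a (Function.update w (-(l : ℤ)) a) (k + 1) 0 = pat l r a w k 1 := by
  funext j
  simp only [pat, Function.update_apply]
  push_cast
  split_ifs <;> first | rfl | omega | (congr 1; omega)

lemma LocalRule.apply_pat_zero {f : (ℤ → ℤ) → ℤ} (hl : LocalRule l r f) (w : ℤ → ℤ) (s : ℤ) :
    f (pat l r a w 0 s) = f (fun _ => a) :=
  hl _ _ fun j _ hj => if_pos (by simpa using hj)

lemma LocalRule.apply_pat_full {f : (ℤ → ℤ) → ℤ} (hl : LocalRule l r f) (w : ℤ → ℤ) :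
    f (pat l r a w (l + r + 1) 0) = f w :=
  hl _ _ fun j hj _ => by
    simp only [pat]
    rw [if_neg (by push_cast; omega)]
    congr 1
    push_cast
    ring

end Pattern

section Sufficiency

variable {S : Finset ℤ} {l r : ℕ} {a : ℤ} {f : (ℤ → ℤ) → ℤ}

lemma LocalCondition.glob_eq (hcond : LocalCondition S l r a f) {c : ℤ → ℤ} (hc : Config S c)
    (i : ℤ) :
    glob f c i = c (i - l) + ∑ k ∈ Icc 1 (l + r),
      (glob (fun w => f (pat l r a w k 0)) c (i + 1) - glob (fun w => f (pat l r a w k 0)) c i) := by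
  simp only [glob, sub_eq_add_neg i, ← pat_window_one]
  exact hcond _ fun j => hc _

lemma LocalCondition.numberConserving (hcond : LocalCondition S l r a f) : NC S f := by
  intro c hc p _ hper
  calc ∑ i ∈ range p, glob f c i
      = ∑ i ∈ range p, c ((i : ℤ) - l) + ∑ k ∈ Icc 1 (l + r), ∑ i ∈ range p,
          (glob (fun w => f (pat l r a w k 0)) c ((i : ℤ) + 1)
            - glob (fun w => f (pat l r a w k 0)) c i) := by
        rw [sum_comm, ← sum_add_distrib]
        exact sum_congr rfl fun i _ => hcond.glob_eq hc i
    _ = ∑ i ∈ range p, c i := by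
        rw [hper.sum_range_sub, sum_eq_zero fun k _ => (hper.glob _).sum_range_add_one_sub,
          add_zero]

end Sufficiency

lemma NC.apply_const {S : Finset ℤ} {f : (ℤ → ℤ) → ℤ} (hNC : NC S f) {a : ℤ} (ha : a ∈ S) :
    f (fun _ => a) = a := by
  simpa [glob] using hNC (fun _ => a) (fun _ => ha) 1 one_pos fun _ => rfl

section Necessity

variable {S : Finset ℤ} {l r : ℕ} {a : ℤ} {f : (ℤ → ℤ) → ℤ}

def block (l r : ℕ) (a : ℤ) (w : ℤ → ℤ) (m : ℤ) : ℤ :=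
  if (r : ℤ) ≤ m ∧ m < r + (l + r + 1) then w (m - r - l) else a

/-- Cells `r, …, r + n - 1` of each period of length `2n` carry `w (-l), …, w r`, all other cells
carry `a`; the `n` windows meeting cell `r` are then `pat l r a w k 0` for `k = 1, …, n`. -/
def blockConfig (l r : ℕ) (a : ℤ) (w : ℤ → ℤ) (i : ℤ) : ℤ :=
  block l r a w (i % ((2 * (l + r + 1) : ℕ) : ℤ))

lemma per_blockConfig (w : ℤ → ℤ) : Per (2 * (l + r + 1)) (blockConfig l r a w) := fun i => by
  simp only [blockConfig, Int.add_emod_right]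

lemma config_blockConfig {w : ℤ → ℤ} (hw : Config S w) (ha : a ∈ S) :
    Config S (blockConfig l r a w) := fun i => by
  unfold blockConfig block
  split_ifs
  exacts [hw _, ha]

lemma blockConfig_eq_block (w : ℤ → ℤ) {m : ℤ} (hm₁ : -(l : ℤ) ≤ m)
    (hm₂ : m < 2 * (l + r + 1) + r) : blockConfig l r a w m = block l r a w m := by
  have hper := per_blockConfig (l := l) (r := r) (a := a) w
  have of_mem_period : ∀ m : ℤ, 0 ≤ m → m < 2 * (l + r + 1) →
      blockConfig l r a w m = block l r a w m := fun m h₁ h₂ => by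
    rw [blockConfig, Int.emod_eq_of_lt h₁ (by push_cast; omega)]
  rcases lt_or_ge m 0 with hneg | hnonneg
  · rw [← hper, of_mem_period _ (by omega) (by push_cast; omega)]
    simp only [block]
    rw [if_neg (by push_cast; omega), if_neg (by omega)]
  · rcases lt_or_ge m (2 * (l + r + 1)) with hlt | hge
    · exact of_mem_period m hnonneg hlt
    · rw [← Function.Periodic.sub_eq hper, of_mem_period _ (by push_cast; omega) (by push_cast; omega)]
      simp only [block]
      rw [if_neg (by omega), if_neg (by omega)]

lemma block_r (w : ℤ → ℤ) : block l r a w r = w (-(l : ℤ)) := by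
  rw [block, if_pos (by omega)]
  congr 1
  ring

lemma block_update_of_ne (w : ℤ → ℤ) {m : ℤ} (hm : m ≠ r) :
    block l r a (Function.update w (-(l : ℤ)) a) m = block l r a w m := by
  simp only [block]
  split_ifs
  · exact Function.update_of_ne (by omega) _ _
  · rfl

lemma LocalRule.glob_blockConfig (hl : LocalRule l r f) (w : ℤ → ℤ) {i : ℕ}
    (hi : i < l + r + 1) : glob f (blockConfig l r a w) i = f (pat l r a w (i + 1) 0) :=
  hl _ _ fun j hj₁ hj₂ => by
    rw [blockConfig_eq_block w (by omega) (by omega)]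
    simp only [block, pat]
    push_cast
    split_ifs <;> first | rfl | omega | (congr 1; omega)

lemma LocalRule.glob_blockConfig_update (hl : LocalRule l r f) (w : ℤ → ℤ) {i : ℕ}
    (hi₁ : l + r + 1 ≤ i) (hi₂ : i < 2 * (l + r + 1)) :
    glob f (blockConfig l r a (Function.update w (-(l : ℤ)) a)) i
      = glob f (blockConfig l r a w) i :=
  hl _ _ fun j hj₁ hj₂ => by
    rw [blockConfig_eq_block _ (by omega) (by omega), blockConfig_eq_block _ (by omega) (by omega),
      block_update_of_ne _ (by omega)]

lemma sum_blockConfig_sub_update (w : ℤ → ℤ) :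
    ∑ i ∈ range (2 * (l + r + 1)),
      (blockConfig l r a w i - blockConfig l r a (Function.update w (-(l : ℤ)) a) i)
      = w (-(l : ℤ)) - a := by
  rw [sum_eq_single r]
  · rw [blockConfig_eq_block _ (by omega) (by omega), blockConfig_eq_block _ (by omega) (by omega)]
    rw [block_r, block_r, Function.update_self]
  · intro i hi hne
    have := mem_range.mp hi
    rw [blockConfig_eq_block _ (by omega) (by omega), blockConfig_eq_block _ (by omega) (by omega),
      block_update_of_ne _ (by omega), sub_self]
  · intro h
    exact absurd (mem_range.mpr (by omega)) h

end Necessity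

lemma NC.localCondition {S : Finset ℤ} {l r : ℕ} {a : ℤ} {f : (ℤ → ℤ) → ℤ} (hNC : NC S f)
    (ha : a ∈ S) (hl : LocalRule l r f) : LocalCondition S l r a f := by
  intro w hw
  set w' := Function.update w (-(l : ℤ)) a
  have hpos : 0 < 2 * (l + r + 1) := by omega
  have conservation : ∑ i ∈ range (2 * (l + r + 1)),
      (glob f (blockConfig l r a w) i - glob f (blockConfig l r a w') i) = w (-(l : ℤ)) - a := by
    rw [sum_sub_distrib, hNC _ (config_blockConfig hw ha) _ hpos (per_blockConfig w),
      hNC _ (config_blockConfig (hw.update _ ha) ha) _ hpos (per_blockConfig w'),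
      ← sum_sub_distrib, sum_blockConfig_sub_update]
  have windows : ∑ i ∈ range (2 * (l + r + 1)),
      (glob f (blockConfig l r a w) i - glob f (blockConfig l r a w') i)
      = ∑ i ∈ range (l + r + 1), (f (pat l r a w (i + 1) 0) - f (pat l r a w i 1)) := by
    rw [two_mul, sum_range_add, ← add_zero (∑ i ∈ range (l + r + 1),
      (f (pat l r a w (i + 1) 0) - f (pat l r a w i 1)))]
    congr 1
    · refine sum_congr rfl fun i hi => ?_
      rw [hl.glob_blockConfig w (mem_range.mp hi), hl.glob_blockConfig w' (mem_range.mp hi),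
        pat_update_succ]
    · refine sum_eq_zero fun i hi => ?_
      rw [hl.glob_blockConfig_update w (by omega) (by have := mem_range.mp hi; omega), sub_self]
  rw [windows, sum_sub_distrib, sum_range_succ, sum_range_succ', hl.apply_pat_full,
    hl.apply_pat_zero, hNC.apply_const ha] at conservation
  rw [sum_Icc_one_eq_sum_range, sum_sub_distrib]
  linarith

theorem numberConserving_iff_localCondition_general
    (S : Finset ℤ) (l r : ℕ) (f : (ℤ → ℤ) → ℤ) (a : ℤ) (ha : a ∈ S)
    (hl : LocalRule l r f) :
    NC S f ↔
      ∀ w : ℤ → ℤ, Config S w →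
        f w = w (-(l : ℤ)) +
          ∑ k ∈ Finset.Icc 1 (l + r),
            (f (pat l r a w k 1) - f (pat l r a w k 0)) :=
  ⟨fun hNC => hNC.localCondition ha hl, LocalCondition.numberConserving⟩

/-- Boccara–Fuks necessary and sufficient condition for number conservation,
for an arbitrary finite state set S ⊂ ℤ and arbitrary fixed state a ∈ S. -/
theorem numberConserving_iff_localCondition
    (S : Finset ℤ) (l r : ℕ) (f : (ℤ → ℤ) → ℤ) (a : ℤ) (ha : a ∈ S)
    (hl : LocalRule l r f) (hC : Closed S f) :
    NC S f ↔
      ∀ w : ℤ → ℤ, Config S w →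
        f w = w (-(l : ℤ)) +
          ∑ k ∈ Finset.Icc 1 (l + r),
            (f (pat l r a w k 1) - f (pat l r a w k 0)) :=
  numberConserving_iff_localCondition_general S l r f a ha hl
end

section
/- Let F be a number-conserving one-dimensional CA with states S ⊆ {0,...,M} (where 0, M ∈ S) and neighborhood {0,...,r} (local rule f with n = r+1 arguments). Then for every configuration c ∈ S^ℤ and every i ∈ ℤ: ∑_{j=i-r}^{i} f(c_j,...,c_{j+r}) ≤ rM + c_i. -/
/-!
Periodize `c` on the block `i - r, …, i + r` (period `2r + 1`) to get `x`, and let `y` be `x` with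
cell `i` raised to `M` in every period. Number conservation for `x` and `y` shows that the outputs of
the cells `i - r, …, i`, the only cells of a period that see cell `i`, rise by exactly `M - c i` in
total. Each output of `y` is at most `M`, and on these cells `x` has the same outputs as `c`, so
their sum is at most `(r + 1) M - (M - c i)`.
-/

open Finset

open Function

theorem Function.Periodic.sum_range_shift {M : Type*} [AddCancelCommMonoid M] {g : ℤ → M}
    {p : ℕ} (hg : Periodic g p) (a : ℤ) :
    ∑ k ∈ range p, g (a + k) = ∑ k ∈ range p, g k := by
  have step : ∀ a : ℤ, ∑ k ∈ range p, g (a + 1 + k) = ∑ k ∈ range p, g (a + k) := by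
    intro a
    have h₁ := sum_range_succ' (fun k : ℕ => g (a + k)) p
    have h₂ := sum_range_succ (fun k : ℕ => g (a + k)) p
    rw [hg a] at h₂
    simp only [Nat.cast_add, Nat.cast_one, Nat.cast_zero, add_zero] at h₁
    simp only [add_assoc, add_comm (1 : ℤ)]
    exact add_right_cancel (h₁.symm.trans h₂)
  induction a using Int.induction_on with
  | zero => simp
  | succ n ih => rw [step, ih]
  | pred n ih => rw [← ih, ← step, sub_add_cancel]

section Periodize

variable {α : Type*}

def periodize (p a : ℤ) (c : ℤ → α) : ℤ → α := fun j => c (a + (j - a) % p)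

theorem periodize_periodic (p a : ℤ) (c : ℤ → α) : Periodic (periodize p a c) p := by
  intro j
  simp only [periodize, add_sub_right_comm, Int.add_emod_right]

theorem periodize_apply_of_le_of_lt {p a j : ℤ} (c : ℤ → α) (h₁ : a ≤ j) (h₂ : j < a + p) :
    periodize p a c j = c j := by
  rw [periodize, Int.emod_eq_of_lt (by omega) (by omega), add_sub_cancel]

def updatePeriodic (p i : ℤ) (m : α) (x : ℤ → α) : ℤ → α :=
  fun j => if p ∣ j - i then m else x j

theorem updatePeriodic_periodic {p : ℤ} {x : ℤ → α} (hx : Periodic x p) (i : ℤ) (m : α) :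
    Periodic (updatePeriodic p i m x) p := by
  intro j
  simp only [updatePeriodic, add_sub_right_comm, dvd_add_self_right, hx j]

theorem updatePeriodic_apply_of_not_dvd {p i j : ℤ} (m : α) (x : ℤ → α) (h : ¬ p ∣ j - i) :
    updatePeriodic p i m x j = x j :=
  if_neg h

end Periodize

section CA

variable {S : Finset ℤ} {f : (ℤ → ℤ) → ℤ} {r : ℕ}

theorem Function.Periodic.glob {c : ℤ → ℤ} {p : ℤ} (hc : Periodic c p) (f : (ℤ → ℤ) → ℤ) :
    Periodic (glob f c) p := fun j =>
  congrArg f <| funext fun t => by rw [add_right_comm]; exact hc _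

theorem LocalRule.glob_eq {c d : ℤ → ℤ} (hl : LocalRule 0 r f) {j : ℤ}
    (h : ∀ t : ℤ, 0 ≤ t → t ≤ r → c (j + t) = d (j + t)) : glob f c j = glob f d j :=
  hl _ _ fun t h₀ hr => h t (by simpa using h₀) hr

theorem Closed.glob_mem (hC : Closed S f) {c : ℤ → ℤ} (hc : Config S c) (j : ℤ) :
    glob f c j ∈ S :=
  hC _ fun _ => hc _

theorem Config.updatePeriodic {x : ℤ → ℤ} (hx : Config S x) (p i : ℤ) {m : ℤ} (hm : m ∈ S) :
    Config S (updatePeriodic p i m x) := fun j => by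
  unfold _root_.updatePeriodic; split_ifs
  exacts [hm, hx j]

theorem NC.sum_range_glob {x : ℤ → ℤ} (hNC : NC S f) (hx : Config S x) {p : ℕ} (hp : 0 < p)
    (hper : Per p x) (a : ℤ) :
    ∑ k ∈ range p, glob f x (a + k) = ∑ k ∈ range p, x (a + k) := by
  have hper' : Periodic x p := hper
  rw [(hper'.glob f).sum_range_shift, hper'.sum_range_shift, hNC x hx p hp hper]

/-- Over one period the outputs change by `m - x i` in total (number conservation), and no cell of
the period outside `i - r, …, i` sees a changed cell. -/
theorem NC.sum_glob_updatePeriodic_sub (hNC : NC S f) (hl : LocalRule 0 r f) {x : ℤ → ℤ}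
    (hx : Config S x) {p : ℕ} (hp : r < p) (hper : Per p x) (i : ℤ) {m : ℤ} (hm : m ∈ S) :
    ∑ k ∈ range (r + 1), (glob f (updatePeriodic p i m x) (i - r + k) - glob f x (i - r + k))
      = m - x i := by
  set y := updatePeriodic p i m x with hy_def
  have hy : Config S y := hx.updatePeriodic p i hm
  have hyper : Per p y := updatePeriodic_periodic hper i m
  have hdiff : ∀ k < p, y (i - r + k) - x (i - r + k) = if k = r then m - x i else 0 := by
    intro k hk
    split_ifs with hkr
    · simp [hy_def, updatePeriodic, hkr]
    · rw [hy_def, updatePeriodic_apply_of_not_dvd, sub_self]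
      intro hd
      have := Int.eq_zero_of_abs_lt_dvd hd (abs_lt.mpr ⟨by omega, by omega⟩)
      omega
  have htotal := congrArg₂ (· - ·) (hNC.sum_range_glob hy (by omega) hyper (i - r))
    (hNC.sum_range_glob hx (by omega) hper (i - r))
  simp only [← sum_sub_distrib] at htotal
  rw [sum_congr rfl fun k hk => hdiff k (mem_range.mp hk),
    sum_ite_eq' (range p) r, if_pos (mem_range.mpr hp),
    show p = (r + 1) + (p - (r + 1)) by omega, sum_range_add] at htotal
  rw [← htotal, left_eq_add]
  refine sum_eq_zero fun k hk => sub_eq_zero.mpr (hl.glob_eq fun t h₀ hr => ?_)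
  rw [mem_range] at hk
  refine updatePeriodic_apply_of_not_dvd m x fun hd => ?_
  have := Int.eq_zero_of_abs_lt_dvd hd (abs_lt.mpr ⟨by omega, by omega⟩)
  omega

end CA

theorem window_sum_bound_general
    (S : Finset ℤ) (M : ℤ) (r : ℕ) (f : (ℤ → ℤ) → ℤ)
    (hS : S ⊆ Finset.Icc 0 M) (hM : M ∈ S)
    (hl : LocalRule 0 r f) (hC : Closed S f) (hNC : NC S f)
    (c : ℤ → ℤ) (hc : Config S c) (i : ℤ) :
    ∑ j ∈ Finset.Icc (i - (r : ℤ)) i, glob f c j ≤ (r : ℤ) * M + c i := by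
  set p : ℕ := 2 * r + 1
  set x := periodize p (i - r) c
  have hx : Config S x := fun j => hc _
  have hxc : ∀ j, i - r ≤ j → j ≤ i + r → x j = c j := fun j h₁ h₂ =>
    periodize_apply_of_le_of_lt c h₁ (by omega)
  have hwindow : ∑ j ∈ Icc (i - r) i, glob f c j = ∑ k ∈ range (r + 1), glob f x (i - r + k) := by
    rw [Int.Icc_eq_finset_map, sum_map, show (i + 1 - (i - r)).toNat = r + 1 by omega]
    simp only [Embedding.trans_apply, Nat.castEmbedding_apply, addLeftEmbedding_apply]
    refine sum_congr rfl fun k hk => hl.glob_eq fun t h₀ hr => (hxc _ ?_ ?_).symm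
    all_goals rw [mem_range] at hk; omega
  have hraise := hNC.sum_glob_updatePeriodic_sub hl hx (by omega : r < p)
    (periodize_periodic _ _ c) i hM
  have hbound : ∑ k ∈ range (r + 1), glob f (updatePeriodic p i M x) (i - r + k) ≤ (r + 1) * M :=
    calc _ ≤ ∑ _k ∈ range (r + 1), M :=
          sum_le_sum fun k _ => (mem_Icc.mp (hS (hC.glob_mem (hx.updatePeriodic p i hM) _))).2
      _ = (r + 1) * M := by simp
  rw [sum_sub_distrib, hxc i (by omega) (by omega)] at hraise
  rw [hwindow]
  linarith

/-- For a number-conserving CA with one-sided neighborhood `{0,...,r}` and states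
in `{0,...,M}`, the sum of the `r+1` new states that can see cell `i` is at most
`rM + c i`. -/
theorem window_sum_bound
    (S : Finset ℤ) (M : ℤ) (r : ℕ) (f : (ℤ → ℤ) → ℤ)
    (hS : S ⊆ Finset.Icc 0 M) (h0 : (0 : ℤ) ∈ S) (hM : M ∈ S)
    (hl : LocalRule 0 r f) (hC : Closed S f) (hNC : NC S f)
    (c : ℤ → ℤ) (hc : Config S c) (i : ℤ) :
    ∑ j ∈ Finset.Icc (i - (r : ℤ)) i, glob f c j ≤ (r : ℤ) * M + c i :=
  window_sum_bound_general S M r f hS hM hl hC hNC c hc i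
end

section
/- Let F = (1, S, N, f) be a one-dimensional CA with S = {1,...,q} and N = {-l,...,r}. Define F̂ = (1, Ŝ, N̂, f̂) with Ŝ = {-q,...,-1,0,1,...,q}, N̂ = {-2l-1,...,2r+1}, and f̂(a_{-2l-1},...,a_{2r+1}) equal to: f(a_{-2l}, a_{-2l+2}, ..., a_{2r}) if a_{2i} = -a_{2i+1} > 0 for all -l ≤ i ≤ r; f(-a_{-2l}, -a_{-2l+2}, ..., -a_{2r}) if a_{2i} = -a_{2i-1} < 0 for all -l ≤ i ≤ r; and a_0 otherwise. Then F̂ is number-conserving. -/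
open Finset

open Classical in
/-- The signed-pair rule: each cell of the original CA is split into a positive
and a negative copy; a cell applies f (with the appropriate sign) only when it
sees a correct alternating configuration a, -a, b, -b, ... and its partner sees
it too; otherwise it keeps its state. -/
noncomputable def fhat (l r : ℕ) (f : (ℤ → ℤ) → ℤ) : (ℤ → ℤ) → ℤ :=
  fun w =>
    if ∀ i : ℤ, -(l : ℤ) ≤ i → i ≤ (r : ℤ) → (w (2*i) = -w (2*i+1) ∧ 0 < w (2*i)) then
      f (fun j => w (2*j))
    else if ∀ i : ℤ, -(l : ℤ) ≤ i → i ≤ (r : ℤ) → (w (2*i) = -w (2*i-1) ∧ w (2*i) < 0) then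
      -f (fun j => -w (2*j))
    else w 0

/-- The signed-pair CA associated to a CA with states {1,...,q} is
number-conserving (on its state set {-q,...,q}). -/
theorem fhat_numberConserving
    (q l r : ℕ) (f : (ℤ → ℤ) → ℤ)
    (hl : LocalRule l r f) (hC : Closed (Finset.Icc 1 (q : ℤ)) f) :
    NC (Finset.Icc (-(q : ℤ)) (q : ℤ)) (fhat l r f) := by
  intro c _hc p hp hper
  classical
  have cc : ∀ {a b : ℤ}, a = b → c a = c b := fun h => by rw [h]
  have key : ∀ m m' : ℤ, m = m' + (p : ℤ) → c m = c m' := by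
    intro m m' h; rw [h, hper]
  set A : ℤ → Prop := fun i => ∀ t : ℤ, -(l : ℤ) ≤ t → t ≤ (r : ℤ) →
      (c (i + 2*t) = -c (i + (2*t+1)) ∧ 0 < c (i + 2*t)) with hAdef
  set Bc : ℤ → Prop := fun i => ∀ t : ℤ, -(l : ℤ) ≤ t → t ≤ (r : ℤ) →
      (c (i + 2*t) = -c (i + (2*t-1)) ∧ c (i + 2*t) < 0) with hBdef
  have hl0 : -(l : ℤ) ≤ 0 := by omega
  have hr0 : (0 : ℤ) ≤ (r : ℤ) := by omega
  have hAB : ∀ k : ℤ, A k ↔ Bc (k + 1) := by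
    intro k
    simp only [hAdef, hBdef]
    constructor
    · intro h t ht1 ht2
      obtain ⟨h1, h2⟩ := h t ht1 ht2
      have e1 : c (k + 1 + (2*t-1)) = c (k + 2*t) := cc (by ring)
      have e2 : c (k + 1 + 2*t) = c (k + (2*t+1)) := cc (by ring)
      constructor <;> linarith
    · intro h t ht1 ht2
      obtain ⟨h1, h2⟩ := h t ht1 ht2
      have e1 : c (k + 1 + (2*t-1)) = c (k + 2*t) := cc (by ring)
      have e2 : c (k + 1 + 2*t) = c (k + (2*t+1)) := cc (by ring)
      constructor <;> linarith
  set g : ℤ → ℤ := fun k => if A k then f (fun j => c (k + 2*j)) - c k else 0 with hgdef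
  have hd : ∀ k : ℤ, glob (fhat l r f) c k = c k + (g k - g (k - 1)) := by
    intro k
    simp only [glob, fhat]
    split_ifs with h1 h2
    · have hAk : A k := fun t a b => h1 t a b
      have hck : 0 < c k := by
        have := (hAk 0 hl0 hr0).2
        simpa using this
      have hnAk1 : ¬ A (k - 1) := by
        intro hk1
        have hBk := (hAB (k-1)).mp hk1
        have h0 := (hBk 0 hl0 hr0).2
        have e : c (k - 1 + 1 + 2*0) = c k := cc (by ring)
        linarith
      simp only [hgdef, if_pos hAk, if_neg hnAk1]
      ring
    · have hAk : ¬ A k := fun hk => h1 fun t a b => hk t a b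
      have hBk : Bc k := fun t a b => h2 t a b
      have hAk1 : A (k - 1) := by
        rw [hAB (k-1)]
        intro t ht1 ht2
        obtain ⟨a1, a2⟩ := hBk t ht1 ht2
        have e1 : c (k - 1 + 1 + 2*t) = c (k + 2*t) := cc (by ring)
        have e2 : c (k - 1 + 1 + (2*t-1)) = c (k + (2*t-1)) := cc (by ring)
        constructor <;> linarith
      have hck : c k = -c (k - 1) := by
        have := (hBk 0 hl0 hr0).1
        have e1 : c (k + 2*0) = c k := cc (by ring)
        have e2 : c (k + (2*0-1)) = c (k - 1) := cc (by ring)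
        linarith
      have hf : f (fun j => -c (k + 2*j)) = f (fun j => c (k - 1 + 2*j)) := by
        apply hl
        intro j hj1 hj2
        have := (hBk j hj1 hj2).1
        have e : c (k + (2*j-1)) = c (k - 1 + 2*j) := cc (by ring)
        show -c (k + 2*j) = c (k - 1 + 2*j)
        linarith
      simp only [hgdef, if_neg hAk, if_pos hAk1]
      rw [hf]
      linarith
    · have hAk : ¬ A k := fun hk => h1 fun t a b => hk t a b
      have hBk : ¬ Bc k := fun hk => h2 fun t a b => hk t a b
      have hnAk1 : ¬ A (k - 1) := by
        intro hk1
        apply hBk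
        intro t ht1 ht2
        obtain ⟨a1, a2⟩ := (hAB (k-1)).mp hk1 t ht1 ht2
        have e1 : c (k - 1 + 1 + 2*t) = c (k + 2*t) := cc (by ring)
        have e2 : c (k - 1 + 1 + (2*t-1)) = c (k + (2*t-1)) := cc (by ring)
        constructor <;> linarith
      simp only [hgdef, if_neg hAk, if_neg hnAk1]
      simp
  have hgp : ∀ k : ℤ, g (k + (p : ℤ)) = g k := by
    intro k
    have hAp : A (k + (p : ℤ)) ↔ A k := by
      simp only [hAdef]
      constructor <;> intro h t ht1 ht2 <;> obtain ⟨h1', h2'⟩ := h t ht1 ht2 <;>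
        [ (have e1 : c (k + (p:ℤ) + 2*t) = c (k + 2*t) := key _ _ (by ring);
           have e2 : c (k + (p:ℤ) + (2*t+1)) = c (k + (2*t+1)) := key _ _ (by ring);
           exact ⟨by linarith, by linarith⟩);
          (have e1 : c (k + (p:ℤ) + 2*t) = c (k + 2*t) := key _ _ (by ring);
           have e2 : c (k + (p:ℤ) + (2*t+1)) = c (k + (2*t+1)) := key _ _ (by ring);
           exact ⟨by linarith, by linarith⟩)]
    have hfv : (fun j => c (k + (p:ℤ) + 2*j)) = (fun j => c (k + 2*j)) := by
      funext j
      exact key _ _ (by ring)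
    have hcv : c (k + (p:ℤ)) = c k := hper k
    simp only [hgdef]
    rw [if_congr hAp (by rw [hfv, hcv]) rfl]
  have hsum : ∑ k ∈ Finset.range p, (g (k : ℤ) - g ((k : ℤ) - 1)) = 0 := by
    have tel := Finset.sum_range_sub (fun n : ℕ => g ((n : ℤ) - 1)) p
    have e : ∀ n : ℕ, g (((n+1 : ℕ) : ℤ) - 1) = g ((n : ℤ)) := by
      intro n; congr 1; push_cast; ring
    calc ∑ k ∈ Finset.range p, (g (k : ℤ) - g ((k : ℤ) - 1))
        = ∑ k ∈ Finset.range p, (g (((k+1 : ℕ) : ℤ) - 1) - g ((k : ℤ) - 1)) := by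
          refine Finset.sum_congr rfl fun k _ => ?_
          rw [e k]
      _ = g ((p : ℤ) - 1) - g (((0:ℕ) : ℤ) - 1) := tel
      _ = 0 := by
          have e2 : (p : ℤ) - 1 = (((0:ℕ) : ℤ) - 1) + (p : ℤ) := by push_cast; ring
          rw [e2, hgp]
          ring
  calc ∑ k ∈ Finset.range p, glob (fhat l r f) c (k : ℤ)
      = ∑ k ∈ Finset.range p, (c (k : ℤ) + (g (k : ℤ) - g ((k : ℤ) - 1))) := by
        exact Finset.sum_congr rfl fun k _ => hd k
    _ = ∑ k ∈ Finset.range p, c (k : ℤ) + ∑ k ∈ Finset.range p, (g (k : ℤ) - g ((k : ℤ) - 1)) :=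
        Finset.sum_add_distrib
    _ = ∑ k ∈ Finset.range p, c (k : ℤ) := by rw [hsum, add_zero]
end

section
/- Let F = (1, S, N, f) be a one-dimensional CA with S = {1,...,q} and neighborhood N = {-l,...,r}, and let F̂ be the signed-pair CA of the previous construction (on states {-q,...,q}, neighborhood {-2l-1,...,2r+1}, where a cell updates by the rule f only when it sees a correct alternating configuration a,−a,b,−b,... and otherwise keeps its state). Then the injection φ : S → S² given by φ(a) = (a, −a) makes F a sub-automaton of the ⟨2,1,0⟩-rescaling of F̂; i.e., applying F and then φ cellwise agrees with packing by pairs, applying F̂, and unpacking. -/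
open Finset

/-- Via the injection a ↦ (a, -a), the original CA F is a sub-automaton of the
⟨2,1,0⟩-rescaling of the signed-pair CA F̂: if d is the pairwise unpacked
configuration of c, then F̂(d) is the pairwise unpacked configuration of F(c). -/
theorem subautomaton_of_rescaled_fhat
    (q l r : ℕ) (f : (ℤ → ℤ) → ℤ)
    (hl : LocalRule l r f) (hC : Closed (Finset.Icc 1 (q : ℤ)) f) :
    ∀ c d : ℤ → ℤ, Config (Finset.Icc 1 (q : ℤ)) c →
      (∀ i : ℤ, d (2*i) = c i ∧ d (2*i+1) = -(c i)) →
      ∀ i : ℤ,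
        glob (fhat l r f) d (2*i) = glob f c i ∧
        glob (fhat l r f) d (2*i+1) = -(glob f c i) := by

  intro c d hc hd i
  have hpos : ∀ j : ℤ, 0 < c j := fun j => by
    have := hc j; simp [Finset.mem_Icc] at this; linarith [this.1]
  constructor
  · show fhat l r f (fun j => d (2*i + j)) = f (fun j => c (i + j))
    unfold fhat
    rw [if_pos]
    · congr 1
      funext j
      have e : 2*i + 2*j = 2*(i+j) := by ring
      simp only [e, (hd (i+j)).1]
    · intro k _ _
      have e1 : 2*i + 2*k = 2*(i+k) := by ring
      have e2 : 2*i + (2*k+1) = 2*(i+k)+1 := by ring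
      refine ⟨?_, ?_⟩
      · simp only [e1, e2, (hd (i+k)).1, (hd (i+k)).2, neg_neg]
      · simp only [e1, (hd (i+k)).1]; exact hpos _
  · show fhat l r f (fun j => d (2*i+1 + j)) = -f (fun j => c (i + j))
    unfold fhat
    rw [if_neg, if_pos]
    · have key : (fun j => -(fun j' => d (2*i+1+j')) (2*j)) = fun j => c (i+j) := by
        funext j
        have e : 2*i+1 + 2*j = 2*(i+j)+1 := by ring
        simp only [e, (hd (i+j)).2, neg_neg]
      rw [key]
    · intro k _ _
      have e1 : 2*i+1 + 2*k = 2*(i+k)+1 := by ring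
      have e2 : 2*i+1 + (2*k-1) = 2*(i+k) := by ring
      refine ⟨?_, ?_⟩
      · simp only [e1, e2, (hd (i+k)).2, (hd (i+k)).1]
      · simp only [e1, (hd (i+k)).2]; linarith [hpos (i+k)]
    · intro h
      have h0 := h 0 (by simp) (by simp)
      simp only at h0
      have e : 2*i+1 + 2*0 = 2*i+1 := by ring
      rw [e, (hd i).2] at h0
      linarith [hpos i, h0.2]
end

section
/- Let F = (1, S, N, f) with S = {a, b, c}, l = r = 3, and f(x_0,...,x_6) = c if (x_0=x_1=x_3=x_4=a and x_2=b) or (x_1=x_2=x_4=x_5=a and x_3=b) or (x_2=x_3=x_5=x_6=a and x_4=b), and f(x_0,...,x_6) = x_3 otherwise. Then the relabeling φ(a)=0, φ(b)=3, φ(c)=1 makes F number-conserving. -/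
open Finset

/-- The three-particle example rule, already relabeled by φ(a)=0, φ(b)=3, φ(c)=1:
output 1 on the three special patterns, identity (center cell) otherwise. -/
def fex : (ℤ → ℤ) → ℤ := fun w =>
  if (w (-3) = 0 ∧ w (-2) = 0 ∧ w (-1) = 3 ∧ w 0 = 0 ∧ w 1 = 0) ∨
     (w (-2) = 0 ∧ w (-1) = 0 ∧ w 0 = 3 ∧ w 1 = 0 ∧ w 2 = 0) ∨
     (w (-1) = 0 ∧ w 0 = 0 ∧ w 1 = 3 ∧ w 2 = 0 ∧ w 3 = 0)
  then 1 else w 0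

/-- Indicator of the pattern `0 0 3 0 0` centered at `i`. -/
def Bf (c : ℤ → ℤ) (i : ℤ) : ℤ :=
  if c (i - 2) = 0 ∧ c (i - 1) = 0 ∧ c i = 3 ∧ c (i + 1) = 0 ∧ c (i + 2) = 0 then 1 else 0

lemma fex_eq (c : ℤ → ℤ) (i : ℤ) :
    glob fex c i = c i + Bf c (i - 1) - 2 * Bf c i + Bf c (i + 1) := by
  simp only [glob, fex, Bf]
  simp only [show i + (-3:ℤ) = i - 3 by ring, show i + (-2:ℤ) = i - 2 by ring,
    show i + (-1:ℤ) = i - 1 by ring, show i + (0:ℤ) = i by ring,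
    show i - 1 - 2 = i - 3 by ring, show i - 1 - 1 = i - 2 by ring,
    show i - 1 + 1 = i by ring, show i - 1 + 2 = i + 1 by ring,
    show i + 1 - 2 = i - 1 by ring, show i + 1 - 1 = i by ring,
    show i + 1 + 1 = i + 2 by ring, show i + 1 + 2 = i + 3 by ring]
  split_ifs <;> omega

lemma Bf_per {p : ℕ} {c : ℤ → ℤ} (hc : Per p c) (i : ℤ) : Bf c (i + (p : ℤ)) = Bf c i := by
  unfold Bf
  have h1 : c (i + (p : ℤ) - 2) = c (i - 2) := by rw [show i + (p:ℤ) - 2 = (i - 2) + p by ring, hc]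
  have h2 : c (i + (p : ℤ) - 1) = c (i - 1) := by rw [show i + (p:ℤ) - 1 = (i - 1) + p by ring, hc]
  have h3 : c (i + (p : ℤ) + 1) = c (i + 1) := by rw [show i + (p:ℤ) + 1 = (i + 1) + p by ring, hc]
  have h4 : c (i + (p : ℤ) + 2) = c (i + 2) := by rw [show i + (p:ℤ) + 2 = (i + 2) + p by ring, hc]
  rw [h1, h2, h3, h4, hc i]

lemma sum_shift (g : ℤ → ℤ) (p : ℕ) (hg : ∀ i : ℤ, g (i + (p : ℤ)) = g i) :
    ∑ k ∈ Finset.range p, g ((k : ℤ) + 1) = ∑ k ∈ Finset.range p, g (k : ℤ) := by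
  have h1 : ∑ k ∈ Finset.range (p + 1), g (k : ℤ)
      = (∑ k ∈ Finset.range p, g ((k : ℤ) + 1)) + g 0 := by
    rw [Finset.sum_range_succ']
    simp [add_comm]
  have h2 : ∑ k ∈ Finset.range (p + 1), g (k : ℤ)
      = (∑ k ∈ Finset.range p, g (k : ℤ)) + g (p : ℤ) := by
    rw [Finset.sum_range_succ]
  have h3 : g (p : ℤ) = g 0 := by simpa using hg 0
  omega

lemma sum_shift' (g : ℤ → ℤ) (p : ℕ) (hg : ∀ i : ℤ, g (i + (p : ℤ)) = g i) :
    ∑ k ∈ Finset.range p, g ((k : ℤ) - 1) = ∑ k ∈ Finset.range p, g (k : ℤ) := by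
  have := sum_shift (fun i => g (i - 1)) p (fun i => by show g (i + (p:ℤ) - 1) = g (i - 1); rw [show i + (p:ℤ) - 1 = (i - 1) + p by ring, hg])
  simp only [add_sub_cancel_right] at this
  omega

/-- The relabeling φ(a)=0, φ(b)=3, φ(c)=1 makes the example CA number-conserving. -/
theorem example_relabeled_numberConserving :
    NC ({0, 3, 1} : Finset ℤ) fex := by
  intro c _ p _ hper
  have key : ∀ k : ℕ, glob fex c (k : ℤ)
      = c (k : ℤ) + Bf c ((k : ℤ) - 1) - 2 * Bf c (k : ℤ) + Bf c ((k : ℤ) + 1) :=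
    fun k => fex_eq c k
  calc ∑ k ∈ Finset.range p, glob fex c (k : ℤ)
      = ∑ k ∈ Finset.range p,
        (c (k : ℤ) + Bf c ((k : ℤ) - 1) - 2 * Bf c (k : ℤ) + Bf c ((k : ℤ) + 1)) := by
        exact Finset.sum_congr rfl fun k _ => key k
    _ = (∑ k ∈ Finset.range p, c (k : ℤ)) + (∑ k ∈ Finset.range p, Bf c ((k : ℤ) - 1))
        - 2 * (∑ k ∈ Finset.range p, Bf c (k : ℤ))
        + (∑ k ∈ Finset.range p, Bf c ((k : ℤ) + 1)) := by
        simp [Finset.sum_add_distrib, Finset.sum_sub_distrib, Finset.mul_sum]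
    _ = ∑ k ∈ Finset.range p, c (k : ℤ) := by
        rw [sum_shift (Bf c) p (Bf_per hper), sum_shift' (Bf c) p (Bf_per hper)]
        ring
end

section
/- Let F = (1, S, N, f) with S = {a, b, c}, l = r = 3, and f as in the three-particle example (f = c on the three special patterns, f(x_0,...,x_6) = x_3 otherwise). Then no bijection φ : {a,b,c} → {0,1,2} makes F number-conserving. -/
open Finset

/-- The abstract three-particle example rule on states Fin 3
(a = 0, b = 1, c = 2): output c on the three special patterns, center otherwise. -/
def fabs : (ℤ → Fin 3) → Fin 3 := fun w =>
  if (w (-3) = 0 ∧ w (-2) = 0 ∧ w (-1) = 1 ∧ w 0 = 0 ∧ w 1 = 0) ∨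
     (w (-2) = 0 ∧ w (-1) = 0 ∧ w 0 = 1 ∧ w 1 = 0 ∧ w 2 = 0) ∨
     (w (-1) = 0 ∧ w 0 = 0 ∧ w 1 = 1 ∧ w 2 = 0 ∧ w 3 = 0)
  then 2 else w 0

/-- The abstract test configuration: period 7, one `b` (=1) in a sea of `a` (=0). -/
def ca : ℤ → Fin 3 := fun i => if i % 7 = 2 then 1 else 0

lemma ca_val (k : ℤ) : ca k = if k % 7 = 2 then 1 else 0 := rfl

/-- No bijection of the three states onto {0,1,2} makes the example CA
number-conserving. -/
theorem example_no_bijective_relabeling :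
    ∀ φ : Fin 3 → ℤ, Function.Injective φ →
      (∀ s, φ s ∈ ({0, 1, 2} : Finset ℤ)) →
      ¬ NC ({0, 1, 2} : Finset ℤ)
          (fun w => φ (fabs (fun j => Function.invFun φ (w j)))) := by
  intro φ hinj hmem hNC
  have hinv : ∀ s, Function.invFun φ (φ s) = s :=
    fun s => Function.leftInverse_invFun hinj s
  have hconf : Config {0,1,2} (fun i => φ (ca i)) := fun i => hmem _
  have hper : Per 7 (fun i => φ (ca i)) := by
    intro i
    simp only
    congr 1
    unfold ca
    congr 1
    simp [Int.add_mul_emod_self_left]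
  have key := hNC (fun i => φ (ca i)) hconf 7 (by norm_num) hper
  have hglob : ∀ k : ℤ,
      glob (fun w => φ (fabs (fun j => Function.invFun φ (w j)))) (fun i => φ (ca i)) k
        = φ (fabs (fun j => ca (k + j))) := by
    intro k
    simp only [glob, hinv]
  rw [Finset.sum_range_succ, Finset.sum_range_succ, Finset.sum_range_succ,
      Finset.sum_range_succ, Finset.sum_range_succ, Finset.sum_range_succ,
      Finset.sum_range_succ, Finset.sum_range_zero,
      Finset.sum_range_succ, Finset.sum_range_succ, Finset.sum_range_succ,
      Finset.sum_range_succ, Finset.sum_range_succ, Finset.sum_range_succ,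
      Finset.sum_range_succ, Finset.sum_range_zero] at key
  simp only [hglob] at key
  have e0 : fabs (fun j => ca ((0:ℕ) + j)) = 0 := by
    simp only [fabs, ca]; norm_num
  have e1 : fabs (fun j => ca ((1:ℕ) + j)) = 2 := by
    simp only [fabs, ca]; norm_num
  have e2 : fabs (fun j => ca ((2:ℕ) + j)) = 2 := by
    simp only [fabs, ca]; norm_num
  have e3 : fabs (fun j => ca ((3:ℕ) + j)) = 2 := by
    simp only [fabs, ca]; norm_num
  have e4 : fabs (fun j => ca ((4:ℕ) + j)) = 0 := by
    simp only [fabs, ca]; norm_num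
  have e5 : fabs (fun j => ca ((5:ℕ) + j)) = 0 := by
    simp only [fabs, ca]; norm_num
  have e6 : fabs (fun j => ca ((6:ℕ) + j)) = 0 := by
    simp only [fabs, ca]; norm_num
  have c0 : ca ((0:ℕ):ℤ) = 0 := by norm_num [ca]
  have c1 : ca ((1:ℕ):ℤ) = 0 := by norm_num [ca]
  have c2 : ca ((2:ℕ):ℤ) = 1 := by norm_num [ca]
  have c3 : ca ((3:ℕ):ℤ) = 0 := by norm_num [ca]
  have c4 : ca ((4:ℕ):ℤ) = 0 := by norm_num [ca]
  have c5 : ca ((5:ℕ):ℤ) = 0 := by norm_num [ca]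
  have c6 : ca ((6:ℕ):ℤ) = 0 := by norm_num [ca]
  rw [e0, e1, e2, e3, e4, e5, e6, c0, c1, c2, c3, c4, c5, c6] at key
  -- key : φ 0 + φ 2 + φ 2 + φ 2 + φ 0 + φ 0 + φ 0 = φ 0 + φ 0 + φ 1 + φ 0 + φ 0 + φ 0 + φ 0
  have h0 := hmem 0
  have h1 := hmem 1
  have h2 := hmem 2
  simp only [Finset.mem_insert, Finset.mem_singleton] at h0 h1 h2
  have d01 : φ 0 ≠ φ 1 := fun h => by exact absurd (hinj h) (by decide)
  have d02 : φ 0 ≠ φ 2 := fun h => by exact absurd (hinj h) (by decide)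
  have d12 : φ 1 ≠ φ 2 := fun h => by exact absurd (hinj h) (by decide)
  rcases h0 with h0|h0|h0 <;> rcases h1 with h1|h1|h1 <;> rcases h2 with h2|h2|h2 <;>
    omega
end

section
/- If a one-dimensional CA local rule f : S^n → S (with S ⊂ ℤ, neighborhood {-l,...,r}, n = l+r+1, a ∈ S) satisfies f(x_1,...,x_n) = x_1 + ∑_{k=1}^{n-1} [f(a,...,a (n-k times), x_2,...,x_{k+1}) − f(a,...,a (n-k times), x_1,...,x_k)] for all tuples, then for every finite configuration c (equal to a outside a finite set), the total sum ∑_{i∈ℤ} (F(c)_i − a) equals ∑_{i∈ℤ} (c_i − a). -/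
open Finset

/-- If the local rule satisfies the Boccara–Fuks condition, then on every finite
configuration (equal to a outside a finite set) the total excess over a is
conserved by the global map. -/
theorem finite_configuration_conservation
    (S : Finset ℤ) (l r : ℕ) (f : (ℤ → ℤ) → ℤ) (a : ℤ) (ha : a ∈ S)
    (hl : LocalRule l r f) (hC : Closed S f)
    (heq : ∀ w : ℤ → ℤ, Config S w →
      f w = w (-(l : ℤ)) +
        ∑ k ∈ Finset.Icc 1 (l + r), (f (pat l r a w k 1) - f (pat l r a w k 0)))
    (c : ℤ → ℤ) (hc : Config S c) (hfin : {i : ℤ | c i ≠ a}.Finite) :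
    ∑ᶠ i : ℤ, (glob f c i - a) = ∑ᶠ i : ℤ, (c i - a) := by
  classical
  have hTc : ∀ z : ℤ, z ∉ {i : ℤ | c i ≠ a} → c z = a := by
    intro z hz; by_contra h; exact hz h
  -- f of the constant-a configuration is a
  have hfa : f (fun _ => a) = a := by
    have h := heq (fun _ => a) (fun _ => ha)
    have hp : ∀ k : ℕ, ∀ s : ℤ, pat l r a (fun _ => a) k s = fun _ => a := by
      intro k s; funext j; simp [pat]
    simp only [hp, sub_self, Finset.sum_const_zero, add_zero] at h
    exact h
  -- the auxiliary "partial" values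
  set G : ℕ → ℤ → ℤ := fun k i => f (pat l r a (fun j => c (i + j)) k 0) - a with hGdef
  -- G vanishes when the relevant window is all a
  have hG0 : ∀ (k : ℕ) (i : ℤ),
      (∀ j : ℤ, -(l : ℤ) ≤ j → j ≤ (r : ℤ) → c (i + j - r + k - l - 1) = a) → G k i = 0 := by
    intro k i hwin
    have : f (pat l r a (fun j => c (i + j)) k 0) = f (fun _ => a) := by
      apply hl
      intro j hj1 hj2
      simp only [pat]
      split_ifs with h
      · rfl
      · rw [show i + (j - (r : ℤ) + k + 0 - l - 1) = i + j - r + k - l - 1 by ring]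
        exact hwin j hj1 hj2
    simp [hGdef, this, hfa]
  -- support of G k is finite
  have hGfin : ∀ k : ℕ, (Function.support (G k)).Finite := by
    intro k
    apply Set.Finite.subset
      (((hfin.prod (Set.finite_Icc (-(l : ℤ)) r)).image
        (fun p : ℤ × ℤ => p.1 - p.2 + (r : ℤ) - k + l + 1)))
    intro i hi
    rw [Function.mem_support] at hi
    by_contra hmem
    apply hi
    apply hG0
    intro j hj1 hj2
    by_contra hne
    apply hmem
    refine ⟨(i + j - r + k - l - 1, j), ⟨hne, Set.mem_Icc.mpr ⟨hj1, hj2⟩⟩, by ring⟩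
  have hGfinS : ∀ k : ℕ, (Function.support fun i => G k (i + 1)).Finite := by
    intro k
    apply Set.Finite.subset ((hGfin k).image (fun z => z - 1))
    intro i hi
    exact ⟨i + 1, hi, by ring⟩
  -- the key pointwise identity
  have key : ∀ i : ℤ, glob f c i - a =
      (c (i - l) - a) + ∑ k ∈ Finset.Icc 1 (l + r), (G k (i + 1) - G k i) := by
    intro i
    have h := heq (fun j => c (i + j)) (fun j => hc (i + j))
    have hshift : ∀ k : ℕ,
        pat l r a (fun j => c (i + j)) k 1 = pat l r a (fun j => c (i + 1 + j)) k 0 := by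
      intro k
      funext j
      simp only [pat]
      split_ifs with hcond
      · rfl
      · rw [show i + (j - (r : ℤ) + k + 1 - l - 1) = i + 1 + (j - (r : ℤ) + k + 0 - l - 1) by ring]
    have hterm : ∀ k ∈ Finset.Icc 1 (l + r),
        f (pat l r a (fun j => c (i + j)) k 1) - f (pat l r a (fun j => c (i + j)) k 0)
          = G k (i + 1) - G k i := by
      intro k _
      simp only [hGdef, hshift k]
      ring
    rw [Finset.sum_congr rfl hterm] at h
    have hg : glob f c i = f (fun j => c (i + j)) := rfl
    rw [hg, h]
    simp only [show i + -(l : ℤ) = i - l from by ring]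
    ring
  -- finiteness of the two summand supports
  have h1 : (Function.support fun i : ℤ => c (i - l) - a).Finite := by
    have himg := hfin.image (fun z : ℤ => z + (l : ℤ))
    apply Set.Finite.subset himg
    intro i hi
    rw [Function.mem_support, sub_ne_zero] at hi
    exact ⟨i - l, hi, by ring⟩
  have h2 : (Function.support fun i : ℤ =>
      ∑ k ∈ Finset.Icc 1 (l + r), (G k (i + 1) - G k i)).Finite := by
    apply Set.Finite.subset
      ((Finset.Icc 1 (l + r)).finite_toSet.biUnion
        (fun k _ => ((hGfinS k).union (hGfin k))))
    intro i hi
    rw [Function.mem_support] at hi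
    obtain ⟨k, hk, hne⟩ := Finset.exists_ne_zero_of_sum_ne_zero hi
    refine Set.mem_biUnion hk ?_
    by_contra hmem
    simp only [Set.mem_union, Function.mem_support, not_or, not_not] at hmem
    exact hne (by rw [hmem.1, hmem.2, sub_zero])
  calc ∑ᶠ i : ℤ, (glob f c i - a)
      = ∑ᶠ i : ℤ, ((c (i - l) - a) + ∑ k ∈ Finset.Icc 1 (l + r), (G k (i + 1) - G k i)) :=
        finsum_congr key
    _ = (∑ᶠ i : ℤ, (c (i - l) - a)) +
        ∑ᶠ i : ℤ, ∑ k ∈ Finset.Icc 1 (l + r), (G k (i + 1) - G k i) :=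
        finsum_add_distrib h1 h2
    _ = (∑ᶠ i : ℤ, (c i - a)) +
        ∑ k ∈ Finset.Icc 1 (l + r), ∑ᶠ i : ℤ, (G k (i + 1) - G k i) := by
        have hper : ∀ k ∈ Finset.Icc 1 (l + r),
            (Function.support fun i : ℤ => G k (i + 1) - G k i).Finite := by
          intro k _
          apply Set.Finite.subset ((hGfinS k).union (hGfin k))
          intro i hi
          rw [Function.mem_support] at hi
          by_contra hmem
          simp only [Set.mem_union, Function.mem_support, not_or, not_not] at hmem
          exact hi (by rw [hmem.1, hmem.2, sub_zero])
        have h3 := finsum_sum_comm (Finset.Icc 1 (l + r))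
          (fun (i : ℤ) (k : ℕ) => G k (i + 1) - G k i) hper
        rw [h3]
        congr 1
        exact finsum_comp_equiv (Equiv.subRight (l : ℤ)) (f := fun i => c i - a)
    _ = (∑ᶠ i : ℤ, (c i - a)) + ∑ k ∈ Finset.Icc 1 (l + r), (0 : ℤ) := by
        congr 1
        apply Finset.sum_congr rfl
        intro k _
        have hsh : ∑ᶠ i : ℤ, G k (i + 1) = ∑ᶠ i : ℤ, G k i :=
          finsum_comp_equiv (Equiv.addRight (1 : ℤ)) (f := G k)
        rw [finsum_sub_distrib (hGfinS k) (hGfin k), hsh, sub_self]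
    _ = ∑ᶠ i : ℤ, (c i - a) := by simp
end
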